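/- If X is a class I simple graph with no isolated vertices, then its complete truncation is class I. If X is a class II simple graph with no isolated vertices whose maximum degree is even, then its complete truncation is class I. -/

import Mathlib

open SimpleGraph

/-- A proper edge coloring of a simple graph: distinct edges sharing a vertex
receive distinct colors. -/
def IsProperEdgeColoring {V α : Type*} (G : SimpleGraph V) (C : Sym2 V → α) : Prop :=
  ∀ e₁ ∈ G.edgeSet, ∀ e₂ ∈ G.edgeSet, e₁ ≠ e₂ → (∃ v, v ∈ e₁ ∧ v ∈ e₂) → C e₁ ≠ C e₂

/-- The chromatic index: least number of colors admitting a proper edge coloring. -/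
noncomputable def chromIndex {V : Type*} (G : SimpleGraph V) : ℕ :=
  sInf {k | ∃ C : Sym2 V → Fin k, IsProperEdgeColoring G C}

/-- Degree of a vertex. -/
noncomputable def deg {V : Type*} (G : SimpleGraph V) (v : V) : ℕ :=
  (G.neighborSet v).ncard

/-- Maximum degree. -/
noncomputable def maxDeg {V : Type*} (G : SimpleGraph V) : ℕ :=
  sSup (Set.range (deg G))

/-- A graph is class I if its chromatic index equals its maximum degree. -/
def ClassI {V : Type*} (G : SimpleGraph V) : Prop := chromIndex G = maxDeg G

/-- The sun over `G`: attach one pendant edge at each vertex of `G`. -/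
def sun {V : Type*} (G : SimpleGraph V) : SimpleGraph (V ⊕ V) :=
  SimpleGraph.fromRel (fun x y =>
    (∃ u v, G.Adj u v ∧ x = Sum.inl u ∧ y = Sum.inl v) ∨
    (∃ v, x = Sum.inl v ∧ y = Sum.inr v))

/-- The pendant edge of the sun attached at vertex `v`. -/
def pendant {V : Type*} (v : V) : Sym2 (V ⊕ V) := s(Sum.inl v, Sum.inr v)

/-- The generalized truncation of `X` determined by the graph `H` on the darts of `X`:
each dart is joined to its reverse dart (the matching `M_F`) and the edges of `H`
(the constituent edges) are added. -/
def trunc {V : Type*} (X : SimpleGraph V) (H : SimpleGraph X.Dart) : SimpleGraph X.Dart :=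
  SimpleGraph.fromRel (fun d d' => d' = d.symm ∨ H.Adj d d')

/-- The constituent graph `H` respects clusters: its edges join only darts with the
same initial vertex. -/
def RespectsClusters {V : Type*} (X : SimpleGraph V) (H : SimpleGraph X.Dart) : Prop :=
  ∀ d d' : X.Dart, H.Adj d d' → d.toProd.1 = d'.toProd.1

/-- The cluster at `v`: darts with initial vertex `v`. -/
def cluster {V : Type*} (X : SimpleGraph V) (v : V) : Set X.Dart :=
  {d : X.Dart | d.toProd.1 = v}

/-- The constituent at `v`, as a graph in its own right. -/
def constituent {V : Type*} (X : SimpleGraph V) (H : SimpleGraph X.Dart) (v : V) :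
    SimpleGraph (cluster X v) := H.induce (cluster X v)

/-- The complete truncation: every constituent is the complete graph on its cluster. -/
def completeTrunc {V : Type*} (X : SimpleGraph V) : SimpleGraph X.Dart :=
  trunc X (SimpleGraph.fromRel (fun d d' => d.toProd.1 = d'.toProd.1))

/-- `X` has no isolated vertices. -/
def NoIsolated {V : Type*} (X : SimpleGraph V) : Prop := ∀ v : V, ∃ w, X.Adj v w

/-- The number of edges of `X` of color `k` incident with `v`. -/
noncomputable def colorCountAt {V α : Type*} (X : SimpleGraph V) (c : Sym2 V → α)
    (v : V) (k : α) : ℕ :=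
  {e | e ∈ X.edgeSet ∧ v ∈ e ∧ c e = k}.ncard

/-- An edge coloring (not necessarily proper) is parity-balanced if for every vertex `v`
and every color `k`, the number of edges of color `k` incident with `v` has the same
parity as the degree of `v`. -/
def ParityBalanced {V : Type*} {m : ℕ} (X : SimpleGraph V) (c : Sym2 V → Fin m) : Prop :=
  ∀ (v : V) (k : Fin m), colorCountAt X c v k % 2 = deg X v % 2

/-- The edges of the sun centered at the constituent at `v`: the constituent edges
at `v` together with the matching edges incident with the cluster at `v`. -/
def sunEdges {V : Type*} (X : SimpleGraph V) (H : SimpleGraph X.Dart) (v : V) :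
    Set (Sym2 X.Dart) :=
  {e | e ∈ (trunc X H).edgeSet ∧ ∃ d : X.Dart, d ∈ e ∧ d.toProd.1 = v}

/-- `H` describes a cyclic truncation of `X`: it respects clusters and every
constituent is a cycle on its cluster. -/
def CyclicConstituents {V : Type*} (X : SimpleGraph V) (H : SimpleGraph X.Dart) : Prop :=
  RespectsClusters X H ∧ (∀ d : X.Dart, deg H d = 2) ∧
    ∀ v : V, (constituent X H v).Connected


/-!
Let `Δ` be the maximum degree of `X`; the degree of a dart `d` in the complete truncation is the
degree of its initial vertex, so the truncation also has maximum degree `Δ` and it suffices to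
colour it with `Δ` colours.

If `c` is a proper `Δ`-edge-colouring of `X`, label each dart `d` by `c(d.edge) ∈ ℤ/Δ` and colour
an edge `ab` of the truncation by the sum of the labels of its ends. The neighbours of a dart `u`
carry the colours of the distinct edges of `X` at the initial vertex of `u`, so their labels are
distinct and the sums with the label of `u` are distinct too.

If `Δ = m + 1` with `m` odd, the complete graph on `ℤ/m ∪ {∞}` has the proper `m`-edge-colouring
`{i, j} ↦ i + j`, `{i, ∞} ↦ 2i` (`2i` is the colour missing at `i` among the `i + j`). Embed every
cluster into this complete graph, pull the colouring back to the constituents and give all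
matching edges one new colour.
-/

section EdgeColoring

variable {V W K : Type*} {G : SimpleGraph V} {C : Sym2 V → K}

theorem isProperEdgeColoring_iff_adj :
    IsProperEdgeColoring G C ↔
      ∀ ⦃u a b⦄, G.Adj u a → G.Adj u b → a ≠ b → C s(u, a) ≠ C s(u, b) := by
  refine ⟨fun hC u a b ha hb hab => ?_, fun h e₁ he₁ e₂ he₂ hne ⟨u, hu₁, hu₂⟩ => ?_⟩
  · exact hC _ ha _ hb (fun h => hab (Sym2.congr_right.mp h))
      ⟨u, Sym2.mem_mk_left _ _, Sym2.mem_mk_left _ _⟩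
  · obtain ⟨a, rfl⟩ := Sym2.mem_iff_exists.mp hu₁
    obtain ⟨b, rfl⟩ := Sym2.mem_iff_exists.mp hu₂
    exact h he₁ he₂ fun hab => hne (hab ▸ rfl)

theorem IsProperEdgeColoring.comp_injective {K' : Type*} (hC : IsProperEdgeColoring G C)
    {f : K → K'} (hf : Function.Injective f) : IsProperEdgeColoring G (f ∘ C) :=
  fun e₁ he₁ e₂ he₂ hne hv h => hC e₁ he₁ e₂ he₂ hne hv (hf h)

theorem IsProperEdgeColoring.comap {G' : SimpleGraph W} {C : Sym2 W → K}
    (hC : IsProperEdgeColoring G' C) (φ : G →g G') (hφ : ∀ v, Set.InjOn φ (G.neighborSet v)) :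
    IsProperEdgeColoring G (C ∘ Sym2.map φ) :=
  isProperEdgeColoring_iff_adj.mpr fun u _ _ ha hb hab =>
    isProperEdgeColoring_iff_adj.mp hC (φ.map_adj ha) (φ.map_adj hb) fun h => hab (hφ u ha hb h)

theorem IsProperEdgeColoring.deg_le_card [Fintype K] (hC : IsProperEdgeColoring G C) (v : V) :
    deg G v ≤ Fintype.card K := by
  have hinj : Set.InjOn (fun w => C s(v, w)) (G.neighborSet v) := fun a ha b hb hab =>
    by_contra fun hne => isProperEdgeColoring_iff_adj.mp hC ha hb hne hab
  calc deg G v = ((fun w => C s(v, w)) '' G.neighborSet v).ncard :=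
        hinj.ncard_image.symm
    _ ≤ Nat.card K := Set.ncard_le_card _
    _ = Fintype.card K := Nat.card_eq_fintype_card

theorem IsProperEdgeColoring.maxDeg_le_card [Fintype K] (hC : IsProperEdgeColoring G C) :
    maxDeg G ≤ Fintype.card K :=
  csSup_le' <| Set.forall_mem_range.mpr hC.deg_le_card

theorem classI_of_isProperEdgeColoring [Fintype K] (hK : Fintype.card K ≤ maxDeg G)
    (hC : IsProperEdgeColoring G C) : ClassI G := by
  have hfin : IsProperEdgeColoring G (Fintype.equivFin K ∘ C) :=
    hC.comp_injective (Fintype.equivFin K).injective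
  obtain ⟨C', hC'⟩ : ∃ C' : Sym2 V → Fin (chromIndex G), IsProperEdgeColoring G C' :=
    Nat.sInf_mem (s := {k | ∃ C : Sym2 V → Fin k, IsProperEdgeColoring G C}) ⟨_, _, hfin⟩
  have hle : chromIndex G ≤ Fintype.card K := Nat.sInf_le ⟨_, hfin⟩
  exact le_antisymm (hle.trans hK) (by simpa using hC'.maxDeg_le_card)

theorem classI_of_isEmpty [IsEmpty V] (G : SimpleGraph V) : ClassI G :=
  classI_of_isProperEdgeColoring (K := Empty) (by simp) (C := isEmptyElim) isEmptyElim

theorem ClassI.exists_isProperEdgeColoring [Finite V] (h : ClassI G) :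
    ∃ C : Sym2 V → Fin (maxDeg G), IsProperEdgeColoring G C := by
  have hne : {k | ∃ C : Sym2 V → Fin k, IsProperEdgeColoring G C}.Nonempty :=
    ⟨_, Finite.equivFin (Sym2 V), fun _ _ _ _ hne _ h => hne ((Finite.equivFin _).injective h)⟩
  exact h ▸ Nat.sInf_mem hne

theorem deg_le_maxDeg [Finite V] (G : SimpleGraph V) (v : V) : deg G v ≤ maxDeg G :=
  le_csSup (Set.finite_range _).bddAbove ⟨v, rfl⟩

theorem maxDeg_pos [Finite V] [Nonempty V] (hG : NoIsolated G) : 0 < maxDeg G := by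
  obtain ⟨v⟩ := ‹Nonempty V›
  obtain ⟨w, hw⟩ := hG v
  exact ((Set.ncard_pos (Set.toFinite _)).mpr ⟨w, hw⟩).trans_le (deg_le_maxDeg G v)

end EdgeColoring

section SumColoring

variable {V A : Type*}

def sumColoring [AddCommMagma A] (f : V → A) : Sym2 V → A :=
  Sym2.lift ⟨fun a b => f a + f b, fun _ _ => add_comm _ _⟩

theorem isProperEdgeColoring_sumColoring [AddCancelCommMonoid A] {G : SimpleGraph V} {f : V → A}
    (hf : ∀ v, Set.InjOn f (G.neighborSet v)) : IsProperEdgeColoring G (sumColoring f) :=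
  isProperEdgeColoring_iff_adj.mpr fun u _ _ ha hb hab h => hab (hf u ha hb (add_left_cancel h))

end SumColoring

section CompleteGraph

variable {m : ℕ}

def completeOptionColor : Option (ZMod m) → Option (ZMod m) → ZMod m
  | some i, some j => i + j
  | some i, none | none, some i => 2 * i
  | none, none => 0

def completeOptionColoring (m : ℕ) : Sym2 (Option (ZMod m)) → ZMod m :=
  Sym2.lift ⟨completeOptionColor, by
    rintro (_ | i) (_ | j) <;> simp only [completeOptionColor, add_comm]⟩

theorem isProperEdgeColoring_completeOptionColoring (hm : Odd m) :
    IsProperEdgeColoring (⊤ : SimpleGraph (Option (ZMod m))) (completeOptionColoring m) := by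
  have h2 : IsUnit (2 : ZMod m) := by
    simpa using (ZMod.isUnit_iff_coprime 2 m).mpr (Nat.coprime_two_left.mpr hm)
  rw [isProperEdgeColoring_iff_adj]
  rintro (_ | k) (_ | i) (_ | j) hua hub hab h <;>
    simp only [completeOptionColoring, Sym2.lift_mk, completeOptionColor, top_adj, ne_eq,
      Option.some.injEq, reduceCtorEq, not_true_eq_false, two_mul] at hua hub hab h
  · exact hab (h2.mul_left_cancel (by rwa [two_mul, two_mul]))
  · exact hub (add_left_cancel h)
  · exact hua (add_left_cancel h).symm
  · exact hab (add_left_cancel h)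

end CompleteGraph

section Truncation

variable {V K : Type*} {X : SimpleGraph V}

theorem trunc_adj {H : SimpleGraph X.Dart} {u a : X.Dart} :
    (trunc X H).Adj u a ↔ u ≠ a ∧ (a = u.symm ∨ H.Adj u a) := by
  have hsymm : u = a.symm ↔ a = u.symm := eq_comm.trans Dart.symm_involutive.eq_iff
  simp only [trunc, SimpleGraph.fromRel_adj, hsymm, H.adj_comm a u]
  tauto

theorem exists_mk_eq_mk_symm_iff {u b : X.Dart} :
    (∃ d : X.Dart, s(u, b) = s(d, d.symm)) ↔ b = u.symm := by
  refine ⟨fun ⟨d, hd⟩ => ?_, fun h => ⟨u, h ▸ rfl⟩⟩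
  rcases Sym2.eq_iff.mp hd with ⟨rfl, rfl⟩ | ⟨rfl, rfl⟩
  · rfl
  · exact (Dart.symm_symm _).symm

open Classical in
noncomputable def truncColoring (X : SimpleGraph V) (C : Sym2 X.Dart → K) :
    Sym2 X.Dart → Option K :=
  fun e => if ∃ d : X.Dart, e = s(d, d.symm) then none else some (C e)

theorem isProperEdgeColoring_truncColoring {H : SimpleGraph X.Dart} {C : Sym2 X.Dart → K}
    (hC : IsProperEdgeColoring H C) : IsProperEdgeColoring (trunc X H) (truncColoring X C) := by
  classical
  rw [isProperEdgeColoring_iff_adj] at hC ⊢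
  intro u a b ha hb hab
  rw [trunc_adj] at ha hb
  simp only [truncColoring, exists_mk_eq_mk_symm_iff]
  by_cases hau : a = u.symm <;> by_cases hbu : b = u.symm
  · exact absurd (hau.trans hbu.symm) hab
  · simp [hau, hbu]
  · simp [hau, hbu]
  · simpa [hau, hbu] using hC (ha.2.resolve_left hau) (hb.2.resolve_left hbu) hab

def clusterGraph (X : SimpleGraph V) : SimpleGraph X.Dart :=
  SimpleGraph.fromRel fun d d' => d.fst = d'.fst

theorem completeTrunc_eq_trunc_clusterGraph : completeTrunc X = trunc X (clusterGraph X) := rfl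

theorem clusterGraph_adj {a b : X.Dart} : (clusterGraph X).Adj a b ↔ a ≠ b ∧ a.fst = b.fst := by
  simp only [clusterGraph, SimpleGraph.fromRel_adj, eq_comm (a := b.fst), or_self]

theorem completeTrunc_adj {u a : X.Dart} :
    (completeTrunc X).Adj u a ↔ u ≠ a ∧ (a = u.symm ∨ u.fst = a.fst) := by
  rw [completeTrunc_eq_trunc_clusterGraph, trunc_adj, clusterGraph_adj]
  tauto

theorem image_edge_neighborSet_completeTrunc (u : X.Dart) :
    Dart.edge '' (completeTrunc X).neighborSet u = X.incidenceSet u.fst := by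
  ext e
  constructor
  · rintro ⟨x, hx, rfl⟩
    refine ⟨x.edge_mem, ?_⟩
    rcases (completeTrunc_adj.mp hx).2 with rfl | h
    · rw [Dart.edge_symm]; exact Sym2.mem_mk_left _ _
    · rw [h]; exact Sym2.mem_mk_left _ _
  · rintro ⟨he, hu⟩
    obtain ⟨w, rfl⟩ := Sym2.mem_iff_exists.mp hu
    let x : X.Dart := ⟨(u.fst, w), he⟩
    by_cases hxu : x = u
    · exact ⟨u.symm, completeTrunc_adj.mpr ⟨u.symm_ne.symm, Or.inl rfl⟩, by
        rw [Dart.edge_symm, ← hxu]; rfl⟩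
    · exact ⟨x, completeTrunc_adj.mpr ⟨Ne.symm hxu, Or.inr rfl⟩, rfl⟩

theorem injOn_edge_neighborSet_completeTrunc (u : X.Dart) :
    Set.InjOn Dart.edge ((completeTrunc X).neighborSet u) := by
  intro x hx y hy hxy
  rw [SimpleGraph.mem_neighborSet, completeTrunc_adj] at hx hy
  refine ((dart_edge_eq_iff x y).mp hxy).resolve_right ?_
  rintro rfl
  rcases hy with ⟨huy, rfl | hy⟩
  · exact hx.1 (u.symm_symm).symm
  · rcases hx.2 with h | h
    · exact huy (Dart.symm_involutive.injective h).symm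
    · exact y.fst_ne_snd (hy.symm.trans h)

theorem deg_completeTrunc (u : X.Dart) : deg (completeTrunc X) u = deg X u.fst := by
  classical
  rw [deg, ← (injOn_edge_neighborSet_completeTrunc u).ncard_image,
    image_edge_neighborSet_completeTrunc, deg, ← Nat.card_coe_set_eq, ← Nat.card_coe_set_eq]
  exact Nat.card_congr (X.incidenceSetEquivNeighborSet _)

theorem maxDeg_completeTrunc (hX : NoIsolated X) : maxDeg (completeTrunc X) = maxDeg X := by
  have hsurj : Function.Surjective fun d : X.Dart => d.fst := fun v =>
    let ⟨w, h⟩ := hX v; ⟨⟨(v, w), h⟩, rfl⟩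
  have hdeg : deg (completeTrunc X) = deg X ∘ fun d => d.fst := funext deg_completeTrunc
  rw [maxDeg, maxDeg, hdeg, hsurj.range_comp]

end Truncation

section Colorings

variable {V : Type*} {X : SimpleGraph V}

theorem isProperEdgeColoring_sumColoring_completeTrunc {A : Type*} [AddCancelCommMonoid A]
    {c : Sym2 V → A} (hc : IsProperEdgeColoring X c) :
    IsProperEdgeColoring (completeTrunc X) (sumColoring (c ∘ Dart.edge)) := by
  refine isProperEdgeColoring_sumColoring fun u x hx y hy hcxy => by_contra fun hxy => ?_
  have hedge : x.edge ≠ y.edge := fun h => hxy (injOn_edge_neighborSet_completeTrunc u hx hy h)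
  have hxu : x.edge ∈ X.incidenceSet u.fst :=
    image_edge_neighborSet_completeTrunc u ▸ Set.mem_image_of_mem _ hx
  have hyu : y.edge ∈ X.incidenceSet u.fst :=
    image_edge_neighborSet_completeTrunc u ▸ Set.mem_image_of_mem _ hy
  exact hc _ hxu.1 _ hyu.1 hedge ⟨u.fst, hxu.2, hyu.2⟩ hcxy

theorem exists_injOn_cluster [Finite V] {L : Type*} [Fintype L]
    (hL : maxDeg X ≤ Fintype.card L) :
    ∃ p : X.Dart → L, ∀ v, Set.InjOn p (cluster X v) := by
  have hemb (v : V) : Nonempty (X.neighborSet v ↪ L) := by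
    have := Fintype.ofFinite (X.neighborSet v)
    refine Function.Embedding.nonempty_of_card_le ?_
    rw [← Nat.card_eq_fintype_card, Nat.card_coe_set_eq]
    exact (deg_le_maxDeg X v).trans hL
  refine ⟨fun d => (hemb d.fst).some ⟨d.snd, d.adj⟩, fun v a ha b hb hab => ?_⟩
  obtain ⟨⟨u, x⟩, hx⟩ := a
  obtain ⟨⟨u', y⟩, hy⟩ := b
  obtain rfl : u' = u := hb.trans ha.symm
  obtain rfl : x = y := congrArg Subtype.val ((hemb _).some.injective hab)
  rfl

theorem exists_isProperEdgeColoring_completeTrunc_of_odd [Finite V] {m : ℕ} (hm : Odd m)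
    (hΔ : maxDeg X ≤ m + 1) :
    ∃ C : Sym2 X.Dart → Option (ZMod m), IsProperEdgeColoring (completeTrunc X) C := by
  have : NeZero m := ⟨hm.pos.ne'⟩
  obtain ⟨p, hp⟩ := exists_injOn_cluster (X := X) (L := Option (ZMod m)) (by simpa using hΔ)
  let φ : clusterGraph X →g ⊤ := ⟨p, fun {a b} h => by
    rw [clusterGraph_adj] at h
    exact fun hab => h.1 (hp a.fst rfl h.2.symm hab)⟩
  have hφ (d : X.Dart) : Set.InjOn φ ((clusterGraph X).neighborSet d) := fun a ha b hb =>
    hp d.fst (clusterGraph_adj.mp ha).2.symm (clusterGraph_adj.mp hb).2.symm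
  exact ⟨_, isProperEdgeColoring_truncColoring
    ((isProperEdgeColoring_completeOptionColoring hm).comap φ hφ)⟩

end Colorings

/-- complete truncations of class I graphs are class I, and complete
truncations of class II graphs of even maximum degree are class I. -/
theorem stmt7 {V : Type*} [Fintype V] (X : SimpleGraph V) (hX : NoIsolated X) :
    (ClassI X → ClassI (completeTrunc X)) ∧
    (¬ ClassI X → Even (maxDeg X) → ClassI (completeTrunc X)) := by
  rcases isEmpty_or_nonempty V with _ | _
  · have : IsEmpty X.Dart := ⟨fun d => isEmptyElim d.fst⟩
    exact ⟨fun _ => classI_of_isEmpty _, fun _ _ => classI_of_isEmpty _⟩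
  have hΔ : maxDeg (completeTrunc X) = maxDeg X := maxDeg_completeTrunc hX
  obtain ⟨m, hm⟩ := Nat.exists_eq_add_one.mpr (maxDeg_pos hX)
  refine ⟨fun hI => ?_, fun _ hE => ?_⟩
  · have : NeZero (maxDeg X) := ⟨by omega⟩
    obtain ⟨c, hc⟩ := hI.exists_isProperEdgeColoring
    exact classI_of_isProperEdgeColoring (by simp [hΔ])
      (isProperEdgeColoring_sumColoring_completeTrunc hc)
  · have hodd : Odd m := by rwa [hm, Nat.even_add_one, Nat.not_even_iff_odd] at hE
    have : NeZero m := ⟨hodd.pos.ne'⟩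
    obtain ⟨C, hC⟩ := exists_isProperEdgeColoring_completeTrunc_of_odd (X := X) hodd hm.le
    exact classI_of_isProperEdgeColoring (by simp [hΔ, hm]) hC
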